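/- Assume α > 0 and −α < m < 0. Let a < 0, b ≥ 0 and d ∈ ℝ with |d|^{n−1}·d > −α·a·b, and let f : ℝ → ℝ solve the power-law ODE on all of [0,∞) with f(0) = a, f'(0) = b, f''(0) = d. Then f has exactly one zero in (0,∞), f(t) → ∞ as t → ∞, and both f'(t) and f''(t) converge to 0 as t → ∞. -/

import Mathlib

open Real Set Filter Topology

/-- The signed power nonlinearity `x ↦ |x|^(n-1) * x`. -/
noncomputable def powLaw (n x : ℝ) : ℝ := |x| ^ (n - 1) * x

/-- `f` solves the power-law ODE `(|f''|^(n-1) f'')' + α f f'' - m (f')² = 0` on `I`: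
`f` is twice continuously differentiable on `I`, `t ↦ |f''(t)|^(n-1) f''(t)` is
differentiable on `I`, and the equation holds on `I`. -/
def SolvesPowerLawODE (n α m : ℝ) (f : ℝ → ℝ) (I : Set ℝ) : Prop :=
  (∀ t ∈ I, DifferentiableAt ℝ f t) ∧
  (∀ t ∈ I, DifferentiableAt ℝ (deriv f) t) ∧
  ContinuousOn (deriv (deriv f)) I ∧
  (∀ t ∈ I, DifferentiableAt ℝ (fun s => powLaw n (deriv (deriv f) s)) t) ∧
  (∀ t ∈ I, deriv (fun s => powLaw n (deriv (deriv f) s)) t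
      + α * f t * deriv (deriv f) t - m * (deriv f t) ^ 2 = 0)

/-!
Write `P(x) = |x|^(n-1) x`. The energy `E = P(f'') + α f f'` satisfies `E' = (α + m) f'² ≥ 0`, so
`E ≥ E(0) > 0`; hence `f'' > 0` wherever `f' = 0`, which keeps `f' ≥ 0` and then `f' > 0` on
`(0, ∞)`. If `f` were bounded, `α f f'` would be small whenever `f'` is, and `E > 0` would push
`f''` up there; so `f'` would eventually stay above a positive level and `f` would be unbounded.
Hence `f → ∞`, with a single zero.

`f''` cannot stay positive: once `f ≥ 0`, `P(f'') - m f f'` is nonincreasing while `f'' > 0`,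
whereas `m f f' → -∞`. At a zero of `f''` the equation reads `(P(f''))' = m f'² < 0`, so `f'' ≤ 0`
from then on and `f'` decreases to some `L ≥ 0`. If `L > 0`, then `P(f'') ≤ E - α L f`, whose
derivative `f' ((α + m) f' - α L)` tends to `m L² < 0`, so `f''` would tend to `-∞`. Finally, with
`f → ∞` and `f' → 0`, `(P(f''))' = m f'² - α f f''` is at least `1` wherever `f'' ≤ -c`, so `f''` is
eventually above `-c`.
-/

theorem powLaw_zero (n : ℝ) : powLaw n 0 = 0 := by simp [powLaw]

theorem powLaw_neg (n x : ℝ) : powLaw n (-x) = -powLaw n x := by simp [powLaw]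

theorem powLaw_of_nonneg {n x : ℝ} (hn : 0 < n) (hx : 0 ≤ x) : powLaw n x = x ^ n := by
  rcases hx.eq_or_lt with rfl | hx
  · rw [powLaw_zero, Real.zero_rpow hn.ne']
  · rw [powLaw, abs_of_pos hx, Real.rpow_sub_one hx.ne', div_mul_cancel₀ _ hx.ne']

theorem powLaw_strictMono {n : ℝ} (hn : 0 < n) : StrictMono (powLaw n) :=
  strictMono_of_odd_strictMonoOn_nonneg (powLaw_neg n) fun x hx y hy hxy => by
    rw [powLaw_of_nonneg hn hx, powLaw_of_nonneg hn hy]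
    exact Real.strictMonoOn_rpow_Ici_of_exponent_pos hn hx hy hxy

theorem powLaw_pos_iff {n x : ℝ} (hn : 0 < n) : 0 < powLaw n x ↔ 0 < x := by
  simpa only [powLaw_zero] using (powLaw_strictMono hn).lt_iff_lt (a := 0)

theorem powLaw_nonpos_iff {n x : ℝ} (hn : 0 < n) : powLaw n x ≤ 0 ↔ x ≤ 0 := by
  simpa only [powLaw_zero] using (powLaw_strictMono hn).le_iff_le (b := 0)

theorem powLaw_rpow_inv {n c : ℝ} (hn : 0 < n) (hc : 0 ≤ c) : powLaw n (c ^ n⁻¹) = c := by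
  rw [powLaw_of_nonneg hn (Real.rpow_nonneg hc _), ← Real.rpow_mul hc, inv_mul_cancel₀ hn.ne',
    Real.rpow_one]

theorem Filter.Tendsto.of_powLaw_atBot {ι : Type*} {l : Filter ι} {n : ℝ} {u : ι → ℝ}
    (hn : 0 < n) (h : Tendsto (fun i => powLaw n (u i)) l atBot) : Tendsto u l atBot :=
  tendsto_atBot.2 fun K =>
    (h.eventually_le_atBot (powLaw n K)).mono fun _ => (powLaw_strictMono hn).le_iff_le.1

section Calculus

variable {g : ℝ → ℝ} {T c ε : ℝ}

theorem monotoneOn_Ici_of_deriv_nonneg (hg : ∀ t ≥ T, DifferentiableAt ℝ g t)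
    (h : ∀ t > T, 0 ≤ deriv g t) : MonotoneOn g (Ici T) :=
  monotoneOn_of_deriv_nonneg (convex_Ici T)
    (fun t ht => (hg t ht).continuousAt.continuousWithinAt)
    (fun t ht => (hg t (interior_subset ht)).differentiableWithinAt)
    (fun t ht => h t (by simpa using ht))

theorem antitoneOn_Ici_of_deriv_nonpos (hg : ∀ t ≥ T, DifferentiableAt ℝ g t)
    (h : ∀ t > T, deriv g t ≤ 0) : AntitoneOn g (Ici T) :=
  antitoneOn_of_deriv_nonpos (convex_Ici T)
    (fun t ht => (hg t ht).continuousAt.continuousWithinAt)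
    (fun t ht => (hg t (interior_subset ht)).differentiableWithinAt)
    (fun t ht => h t (by simpa using ht))

theorem tendsto_atTop_of_deriv_ge (hc : 0 < c) (hg : ∀ᶠ t in atTop, DifferentiableAt ℝ g t)
    (h : ∀ᶠ t in atTop, c ≤ deriv g t) : Tendsto g atTop atTop := by
  obtain ⟨T, hT⟩ := eventually_atTop.1 (hg.and h)
  have hlin : ∀ t ≥ T, c * (t - T) ≤ g t - g T := fun t ht =>
    (convex_Ici T).mul_sub_le_image_sub_of_le_deriv
      (fun t ht => (hT t ht).1.continuousAt.continuousWithinAt)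
      (fun t ht => (hT t (interior_subset ht)).1.differentiableWithinAt)
      (fun t ht => (hT t (interior_subset ht)).2) T self_mem_Ici t ht ht
  refine tendsto_atTop_mono' _ ((eventually_ge_atTop T).mono fun t ht => ?_)
    (tendsto_atTop_add_const_left _ (g T)
      ((tendsto_atTop_add_const_right _ (-T) tendsto_id).const_mul_atTop hc))
  show g T + c * (t + -T) ≤ g t
  linarith [hlin t ht]

theorem tendsto_atBot_of_deriv_le (hc : c < 0) (hg : ∀ᶠ t in atTop, DifferentiableAt ℝ g t)
    (h : ∀ᶠ t in atTop, deriv g t ≤ c) : Tendsto g atTop atBot := by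
  refine tendsto_neg_atTop_iff.1 (tendsto_atTop_of_deriv_ge (neg_pos.2 hc)
    (hg.mono fun t ht => ht.neg) (h.mono fun t ht => ?_))
  rw [deriv.fun_neg]
  linarith

theorem not_tendsto_deriv_atBot (hg : ∀ᶠ t in atTop, DifferentiableAt ℝ g t)
    (hc : ∀ᶠ t in atTop, c ≤ g t) : ¬Tendsto (deriv g) atTop atBot := fun h => by
  obtain ⟨_, hgt, hct⟩ := (((tendsto_atBot_of_deriv_le neg_one_lt_zero hg
    (h.eventually_le_atBot (-1))).eventually_lt_atBot c).and hc).exists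
  linarith

theorem le_of_deriv_pos_of_eq (hg : ∀ t ≥ T, DifferentiableAt ℝ g t) (hT : ε ≤ g T)
    (h : ∀ t ≥ T, g t = ε → 0 < deriv g t) : ∀ t ≥ T, ε ≤ g t := fun _ ht =>
  image_le_of_deriv_right_lt_deriv_boundary' (f' := fun _ => 0) continuousOn_const
    (fun _ _ => hasDerivWithinAt_const _ _ _) hT
    (fun s hs => (hg s hs.1).continuousAt.continuousWithinAt)
    (fun s hs => (hg s hs.1).hasDerivAt.hasDerivWithinAt)
    (fun s hs hs' => h s hs.1 hs'.symm) ⟨ht, le_rfl⟩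

theorem eventually_ge_of_deriv_ge_of_le (hc : 0 < c)
    (hg : ∀ᶠ t in atTop, DifferentiableAt ℝ g t)
    (h : ∀ᶠ t in atTop, g t ≤ ε → c ≤ deriv g t) : ∀ᶠ t in atTop, ε ≤ g t := by
  obtain ⟨T, hT⟩ := eventually_atTop.1 (hg.and h)
  obtain ⟨T₁, hT₁, hεT₁⟩ : ∃ T₁ ≥ T, ε ≤ g T₁ := by
    by_contra! hlt
    have hgrow := tendsto_atTop_of_deriv_ge hc hg
      (eventually_atTop.2 ⟨T, fun t ht => (hT t ht).2 (hlt t ht).le⟩)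
    obtain ⟨t, ht, hεt⟩ := ((eventually_ge_atTop T).and (hgrow.eventually_ge_atTop ε)).exists
    exact (hlt t ht).not_ge hεt
  refine eventually_atTop.2 ⟨T₁, le_of_deriv_pos_of_eq (fun t ht => (hT t (hT₁.trans ht)).1) hεT₁
    fun t ht hgt => hc.trans_le ((hT t (hT₁.trans ht)).2 hgt.le)⟩

theorem exists_tendsto_of_antitoneOn_Ici (hg : AntitoneOn g (Ici T)) (hc : ∀ t ≥ T, c ≤ g t) :
    ∃ L, Tendsto g atTop (𝓝 L) ∧ ∀ t ≥ T, L ≤ g t := by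
  set g' : ℝ → ℝ := fun t => g (max t T)
  have hanti : Antitone g' := fun x y hxy =>
    hg (le_max_right x T) (le_max_right y T) (max_le_max_right T hxy)
  have hbdd : BddBelow (range g') := ⟨c, by rintro _ ⟨t, rfl⟩; exact hc _ (le_max_right t T)⟩
  have heq : ∀ t ≥ T, g' t = g t := fun t ht => by simp only [g', max_eq_left ht]
  refine ⟨⨅ t, g' t, (tendsto_atTop_ciInf hanti hbdd).congr' ?_, fun t ht => ?_⟩
  · exact (eventually_ge_atTop T).mono heq
  · exact heq t ht ▸ ciInf_le hbdd t

theorem StrictMonoOn.existsUnique_pos_eq_zero (hmono : StrictMonoOn g (Ici 0))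
    (hcont : ContinuousOn g (Ici 0)) (h0 : g 0 < 0) (htop : Tendsto g atTop atTop) :
    ∃! t, 0 < t ∧ g t = 0 := by
  obtain ⟨T, hT, hT0⟩ := ((htop.eventually_gt_atTop 0).and (eventually_ge_atTop 0)).exists
  obtain ⟨t, ht, hgt⟩ := intermediate_value_Ioo hT0 (hcont.mono Icc_subset_Ici_self) ⟨h0, hT⟩
  exact ⟨t, ⟨ht.1, hgt⟩, fun s ⟨hs, hgs⟩ => hmono.injOn hs.le ht.1.le (hgs.trans hgt.symm)⟩

end Calculus

noncomputable def energy (n α : ℝ) (f : ℝ → ℝ) (t : ℝ) : ℝ :=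
  powLaw n (deriv (deriv f) t) + α * f t * deriv f t

namespace SolvesPowerLawODE

variable {n α m : ℝ} {f : ℝ → ℝ} {I : Set ℝ} {t : ℝ}

theorem hasDerivAt_powLaw_deriv2 (hf : SolvesPowerLawODE n α m f I) (ht : t ∈ I) :
    HasDerivAt (fun s => powLaw n (deriv (deriv f) s))
      (m * deriv f t ^ 2 - α * f t * deriv (deriv f) t) t :=
  (hf.2.2.2.1 t ht).hasDerivAt.congr_deriv (by linarith [hf.2.2.2.2 t ht])

theorem hasDerivAt_energy (hf : SolvesPowerLawODE n α m f I) (ht : t ∈ I) :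
    HasDerivAt (energy n α f) ((α + m) * deriv f t ^ 2) t :=
  ((hf.hasDerivAt_powLaw_deriv2 ht).add
    (((hf.1 t ht).hasDerivAt.const_mul α).mul (hf.2.1 t ht).hasDerivAt)).congr_deriv (by ring)

theorem energy_monotoneOn {T : ℝ} (hf : SolvesPowerLawODE n α m f (Ici T)) (hαm : 0 ≤ α + m) :
    MonotoneOn (energy n α f) (Ici T) :=
  monotoneOn_Ici_of_deriv_nonneg (fun _ ht => (hf.hasDerivAt_energy ht).differentiableAt)
    fun _ ht => (hf.hasDerivAt_energy (le_of_lt ht)).deriv ▸ by positivity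

theorem energy_pos (hf : SolvesPowerLawODE n α m f (Ici 0)) (hαm : 0 ≤ α + m)
    (hE : 0 < energy n α f 0) (ht : 0 ≤ t) : 0 < energy n α f t :=
  hE.trans_le (hf.energy_monotoneOn hαm self_mem_Ici ht ht)

theorem deriv2_pos_of_deriv_eq_zero (hf : SolvesPowerLawODE n α m f (Ici 0)) (hn : 0 < n)
    (hαm : 0 ≤ α + m) (hE : 0 < energy n α f 0) (ht : 0 ≤ t) (h : deriv f t = 0) :
    0 < deriv (deriv f) t := by
  have := hf.energy_pos hαm hE ht
  rwa [energy, h, mul_zero, add_zero, powLaw_pos_iff hn] at this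

theorem deriv_nonneg (hf : SolvesPowerLawODE n α m f (Ici 0)) (hn : 0 < n) (hαm : 0 ≤ α + m)
    (hE : 0 < energy n α f 0) (hb : 0 ≤ deriv f 0) : ∀ t ≥ 0, 0 ≤ deriv f t :=
  le_of_deriv_pos_of_eq hf.2.1 hb fun _ ht h => hf.deriv2_pos_of_deriv_eq_zero hn hαm hE ht h

theorem deriv_pos (hf : SolvesPowerLawODE n α m f (Ici 0)) (hn : 0 < n) (hαm : 0 ≤ α + m)
    (hE : 0 < energy n α f 0) (hb : 0 ≤ deriv f 0) (ht : 0 < t) : 0 < deriv f t := by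
  refine (hf.deriv_nonneg hn hαm hE hb t ht.le).lt_of_ne' fun h => ?_
  -- `t` would be an interior minimum of `f'`, forcing `f'' t = 0`.
  have hmin : IsLocalMin (deriv f) t := by
    filter_upwards [Ici_mem_nhds ht] with s hs
    exact h ▸ hf.deriv_nonneg hn hαm hE hb s hs
  exact (hf.deriv2_pos_of_deriv_eq_zero hn hαm hE ht.le h).ne' hmin.deriv_eq_zero

theorem strictMonoOn (hf : SolvesPowerLawODE n α m f (Ici 0)) (hn : 0 < n) (hαm : 0 ≤ α + m)
    (hE : 0 < energy n α f 0) (hb : 0 ≤ deriv f 0) : StrictMonoOn f (Ici 0) :=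
  strictMonoOn_of_deriv_pos (convex_Ici 0)
    (fun t ht => (hf.1 t ht).continuousAt.continuousWithinAt)
    fun _ ht => hf.deriv_pos hn hαm hE hb (by simpa using ht)

theorem tendsto_atTop (hf : SolvesPowerLawODE n α m f (Ici 0)) (hn : 0 < n) (hα : 0 < α)
    (hαm : 0 ≤ α + m) (hE : 0 < energy n α f 0) (hb : 0 ≤ deriv f 0) :
    Tendsto f atTop atTop := by
  by_contra hnot
  obtain ⟨K, hK⟩ : ∃ K, ∀ t ≥ 0, f t ≤ K := by
    obtain ⟨K, hK⟩ := not_forall.1 (mt Filter.tendsto_atTop.2 hnot)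
    refine ⟨K, fun t ht => ?_⟩
    obtain ⟨s, hts, hs⟩ := frequently_atTop.1 (not_eventually.1 hK) t
    exact ((hf.strictMonoOn hn hαm hE hb).monotoneOn ht (ht.trans hts) hts).trans (not_le.1 hs).le
  set P := max K 1
  set E := energy n α f 0
  set ε := E / (2 * α * P)
  set c := (E / 2) ^ n⁻¹
  have hP : 0 < P := zero_lt_one.trans_le (le_max_right K 1)
  have hε : 0 < ε := by positivity
  have hc : 0 < c := by positivity
  have hslow : ∀ t ≥ 0, deriv f t ≤ ε → c ≤ deriv (deriv f) t := by
    intro t ht hsmall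
    have hprod : α * f t * deriv f t ≤ E / 2 := calc
      α * f t * deriv f t ≤ α * P * ε := by
        have := hf.deriv_nonneg hn hαm hE hb t ht
        have := (hK t ht).trans (le_max_left K 1)
        gcongr
      _ = E / 2 := by simp only [ε]; field_simp
    have hEt : E ≤ energy n α f t := hf.energy_monotoneOn hαm self_mem_Ici ht ht
    rw [← (powLaw_strictMono hn).le_iff_le, powLaw_rpow_inv hn (by positivity)]
    linarith [show energy n α f t = powLaw n (deriv (deriv f) t) + α * f t * deriv f t from rfl]
  have hfast : ∀ᶠ t in atTop, ε ≤ deriv f t :=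
    eventually_ge_of_deriv_ge_of_le hc ((eventually_ge_atTop 0).mono hf.2.1)
      ((eventually_ge_atTop 0).mono hslow)
  exact hnot (tendsto_atTop_of_deriv_ge hε ((eventually_ge_atTop 0).mono hf.1) hfast)

theorem exists_deriv2_nonpos (hf : SolvesPowerLawODE n α m f (Ici 0)) (hn : 0 < n)
    (hα : 0 < α) (hαm : 0 ≤ α + m) (hm : m < 0) (hE : 0 < energy n α f 0)
    (hb : 0 ≤ deriv f 0) : ∃ t > 0, deriv (deriv f) t ≤ 0 := by
  by_contra! hpos
  have hftop := hf.tendsto_atTop hn hα hαm hE hb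
  set δ := deriv f 1
  have hδ : 0 < δ := hf.deriv_pos hn hαm hE hb one_pos
  have hδle : ∀ t ≥ 1, δ ≤ deriv f t := fun t ht =>
    monotoneOn_Ici_of_deriv_nonneg (fun s hs => hf.2.1 s (zero_le_one.trans hs))
      (fun s hs => (hpos s (one_pos.trans hs)).le) self_mem_Ici ht ht
  obtain ⟨T, hT⟩ := eventually_atTop.1 ((hftop.eventually_ge_atTop 0).and (eventually_ge_atTop 1))
  set Ψ : ℝ → ℝ := fun t => powLaw n (deriv (deriv f) t) - m * (f t * deriv f t)
  have hΨ : ∀ t ≥ T, HasDerivAt Ψ (-(α + m) * (f t * deriv (deriv f) t)) t := fun t ht => by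
    have ht0 : t ∈ Ici (0 : ℝ) := zero_le_one.trans (hT t ht).2
    exact ((hf.hasDerivAt_powLaw_deriv2 ht0).sub
      (((hf.1 t ht0).hasDerivAt.mul (hf.2.1 t ht0).hasDerivAt).const_mul m)).congr_deriv (by ring)
  have hΨanti : AntitoneOn Ψ (Ici T) :=
    antitoneOn_Ici_of_deriv_nonpos (fun t ht => (hΨ t ht).differentiableAt) fun t ht => by
      rw [(hΨ t ht.le).deriv]
      have := mul_nonneg hαm
        (mul_nonneg (hT t ht.le).1 (hpos t (by linarith [(hT t ht.le).2])).le)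
      linarith
  have hbot : Tendsto (fun t => Ψ T + m * δ * f t) atTop atBot :=
    tendsto_atBot_add_const_left _ _ (hftop.const_mul_atTop_of_neg (mul_neg_of_neg_of_pos hm hδ))
  obtain ⟨t, hneg, ht⟩ := ((hbot.eventually_lt_atBot 0).and (eventually_ge_atTop T)).exists
  have ht1 : 1 ≤ t := (hT t ht).2
  have hΨt : Ψ t ≤ Ψ T := hΨanti self_mem_Ici ht ht
  have hprod : m * (f t * deriv f t) ≤ m * (δ * f t) :=
    mul_le_mul_of_nonpos_left (by nlinarith [hδle t ht1, (hT t ht).1]) hm.le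
  have hH : 0 < powLaw n (deriv (deriv f) t) := (powLaw_pos_iff hn).2 (hpos t (by linarith))
  simp only [Ψ] at hΨt hneg
  linarith

theorem deriv2_nonpos_of_le (hf : SolvesPowerLawODE n α m f (Ici 0)) (hn : 0 < n)
    (hαm : 0 ≤ α + m) (hm : m < 0) (hE : 0 < energy n α f 0) (hb : 0 ≤ deriv f 0) {t₀ : ℝ}
    (ht₀ : 0 < t₀) (h : deriv (deriv f) t₀ ≤ 0) : ∀ t ≥ t₀, deriv (deriv f) t ≤ 0 := by
  have hH := le_of_deriv_pos_of_eq (g := fun t => -powLaw n (deriv (deriv f) t)) (ε := 0)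
    (fun t ht => (hf.2.2.2.1 t (ht₀.le.trans ht)).neg)
    (neg_nonneg.2 ((powLaw_nonpos_iff hn).2 h)) fun t ht hzero => by
      have ht0 : t ∈ Ici (0 : ℝ) := ht₀.le.trans ht
      have h2 : deriv (deriv f) t = 0 :=
        (powLaw_strictMono hn).injective (by rw [powLaw_zero]; linarith)
      rw [deriv.fun_neg, (hf.hasDerivAt_powLaw_deriv2 ht0).deriv, h2]
      have := mul_neg_of_neg_of_pos hm (pow_pos (hf.deriv_pos hn hαm hE hb (ht₀.trans_le ht)) 2)
      linarith
  exact fun t ht => (powLaw_nonpos_iff hn).1 (neg_nonneg.1 (hH t ht))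

theorem eventually_deriv2_nonpos (hf : SolvesPowerLawODE n α m f (Ici 0)) (hn : 0 < n)
    (hα : 0 < α) (hαm : 0 ≤ α + m) (hm : m < 0) (hE : 0 < energy n α f 0)
    (hb : 0 ≤ deriv f 0) : ∀ᶠ t in atTop, deriv (deriv f) t ≤ 0 := by
  obtain ⟨t₀, ht₀, h⟩ := hf.exists_deriv2_nonpos hn hα hαm hm hE hb
  exact eventually_atTop.2 ⟨t₀, hf.deriv2_nonpos_of_le hn hαm hm hE hb ht₀ h⟩

theorem tendsto_deriv_zero (hf : SolvesPowerLawODE n α m f (Ici 0)) (hn : 0 < n)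
    (hα : 0 < α) (hαm : 0 ≤ α + m) (hm : m < 0) (hE : 0 < energy n α f 0)
    (hb : 0 ≤ deriv f 0) : Tendsto (deriv f) atTop (𝓝 0) := by
  have hnonneg := hf.deriv_nonneg hn hαm hE hb
  obtain ⟨T, hT⟩ := eventually_atTop.1 ((hf.eventually_deriv2_nonpos hn hα hαm hm hE hb).and
    (((hf.tendsto_atTop hn hα hαm hE hb).eventually_ge_atTop 0).and (eventually_ge_atTop 0)))
  obtain ⟨L, hL, hLle⟩ := exists_tendsto_of_antitoneOn_Ici
    (antitoneOn_Ici_of_deriv_nonpos (fun t ht => hf.2.1 t (hT t ht).2.2)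
      fun t ht => (hT t ht.le).1) fun t ht => hnonneg t (hT t ht).2.2
  have hL0 : 0 ≤ L := ge_of_tendsto hL ((eventually_ge_atTop 0).mono hnonneg)
  suffices L = 0 from this ▸ hL
  by_contra hne
  have hLpos : 0 < L := hL0.lt_of_ne' hne
  set Φ : ℝ → ℝ := fun t => energy n α f t - α * L * f t
  have hΦ : ∀ t ≥ T, HasDerivAt Φ (deriv f t * ((α + m) * deriv f t - α * L)) t := fun t ht =>
    ((hf.hasDerivAt_energy (hT t ht).2.2).sub
      ((hf.1 t (hT t ht).2.2).hasDerivAt.const_mul (α * L))).congr_deriv (by ring)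
  have hslope : ∀ᶠ t in atTop, (α + m) * deriv f t - α * L < m * L / 2 :=
    ((hL.const_mul (α + m)).sub_const (α * L)).eventually_lt_const (by nlinarith)
  have hΦbot : Tendsto Φ atTop atBot := by
    refine tendsto_atBot_of_deriv_le (c := m * L ^ 2 / 2)
      (by nlinarith [mul_neg_of_neg_of_pos hm (pow_pos hLpos 2)])
      (eventually_atTop.2 ⟨T, fun t ht => (hΦ t ht).differentiableAt⟩)
      ((hslope.and (eventually_ge_atTop T)).mono fun t ⟨hs, ht⟩ => ?_)
    have hmL : m * L / 2 ≤ 0 := by nlinarith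
    rw [(hΦ t ht).deriv]
    nlinarith [mul_le_mul_of_nonneg_left hs.le (hLpos.le.trans (hLle t ht)),
      mul_le_mul_of_nonpos_right (hLle t ht) hmL]
  have hH : Tendsto (fun t => powLaw n (deriv (deriv f) t)) atTop atBot := by
    refine tendsto_atBot_mono' _ ((eventually_ge_atTop T).mono fun t ht => ?_) hΦbot
    have := mul_le_mul_of_nonneg_left (hLle t ht) (mul_nonneg hα.le (hT t ht).2.1)
    simp only [Φ, energy]
    nlinarith
  exact not_tendsto_deriv_atBot ((eventually_ge_atTop 0).mono hf.2.1)
    ((eventually_ge_atTop 0).mono hnonneg) (hH.of_powLaw_atBot hn)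

theorem eventually_neg_le_deriv2 (hf : SolvesPowerLawODE n α m f (Ici 0)) (hn : 0 < n)
    (hα : 0 < α) (hαm : 0 ≤ α + m) (hm : m < 0) (hE : 0 < energy n α f 0)
    (hb : 0 ≤ deriv f 0) {c : ℝ} (hc : 0 < c) : ∀ᶠ t in atTop, -c ≤ deriv (deriv f) t := by
  -- Once `f ≥ (1 - m) / (α c)` and `f'² < 1`, `f'' ≤ -c` forces `(powLaw n f'')' ≥ 1`.
  have hH := eventually_ge_of_deriv_ge_of_le (g := fun t => powLaw n (deriv (deriv f) t))
    (ε := powLaw n (-c)) one_pos ((eventually_ge_atTop 0).mono hf.2.2.2.1) (by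
      filter_upwards [eventually_ge_atTop 0,
        (hf.tendsto_atTop hn hα hαm hE hb).eventually_ge_atTop ((1 - m) / (α * c)),
        ((hf.tendsto_deriv_zero hn hα hαm hm hE hb).pow 2).eventually_lt_const
          (show (0 : ℝ) ^ 2 < 1 by norm_num)] with t ht hft hf't hle
      have hf2 : deriv (deriv f) t ≤ -c := (powLaw_strictMono hn).le_iff_le.1 hle
      have hfc : 1 - m ≤ α * c * f t := by rwa [div_le_iff₀ (by positivity), mul_comm] at hft
      rw [(hf.hasDerivAt_powLaw_deriv2 ht).deriv]
      have hft0 : 0 ≤ f t := (div_nonneg (by linarith) (by positivity)).trans hft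
      nlinarith [mul_nonneg (mul_nonneg hα.le hft0) (show 0 ≤ -c - deriv (deriv f) t by linarith)])
  exact hH.mono fun t ht => (powLaw_strictMono hn).le_iff_le.1 ht

theorem tendsto_deriv2_zero (hf : SolvesPowerLawODE n α m f (Ici 0)) (hn : 0 < n)
    (hα : 0 < α) (hαm : 0 ≤ α + m) (hm : m < 0) (hE : 0 < energy n α f 0)
    (hb : 0 ≤ deriv f 0) : Tendsto (deriv (deriv f)) atTop (𝓝 0) := by
  refine tendsto_order.2 ⟨fun a ha => ?_, fun a ha => ?_⟩
  · exact (hf.eventually_neg_le_deriv2 hn hα hαm hm hE hb (c := -a / 2) (by linarith)).mono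
      fun t ht => by linarith
  · exact (hf.eventually_deriv2_nonpos hn hα hαm hm hE hb).mono fun t ht => ht.trans_lt ha

end SolvesPowerLawODE

theorem stmt_9 (n α m : ℝ) (hn : 1 < n) (hα : 0 < α) (hm₁ : -α < m) (hm₂ : m < 0)
    (f : ℝ → ℝ) (a b d : ℝ)
    (ha : a < 0) (hb : 0 ≤ b) (hd : |d| ^ (n - 1) * d > -α * a * b)
    (hf : SolvesPowerLawODE n α m f (Set.Ici 0))
    (hf0 : f 0 = a) (hf0' : deriv f 0 = b) (hf0'' : deriv (deriv f) 0 = d) :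
    (∃! t : ℝ, 0 < t ∧ f t = 0) ∧
    Filter.Tendsto f Filter.atTop Filter.atTop ∧
    Filter.Tendsto (deriv f) Filter.atTop (nhds 0) ∧
    Filter.Tendsto (deriv (deriv f)) Filter.atTop (nhds 0) := by
  have hn₀ : 0 < n := by linarith
  have hαm : 0 ≤ α + m := by linarith
  have hE : 0 < energy n α f 0 := by
    rw [energy, hf0, hf0', hf0'', powLaw]
    linarith
  rw [← hf0'] at hb
  have htop := hf.tendsto_atTop hn₀ hα hαm hE hb
  refine ⟨?_, htop, hf.tendsto_deriv_zero hn₀ hα hαm hm₂ hE hb,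
    hf.tendsto_deriv2_zero hn₀ hα hαm hm₂ hE hb⟩
  exact (hf.strictMonoOn hn₀ hαm hE hb).existsUnique_pos_eq_zero
    (fun t ht => (hf.1 t ht).continuousAt.continuousWithinAt) (hf0 ▸ ha) htop
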